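/- Let H be a finite-dimensional Hilbert space and W ⊆ B(H), W̃ ⊆ B(H)* linear subspaces. Then S^CP, the set of completely positive maps F : B(H) → B(H) with F(W) ⊆ W and F*(W̃) ⊆ W̃, is a pointed SDR cone in B(H) ⊗ B(H)*: there is a linear subspace 𝒲 ⊆ B(H ⊗ H) such that S^CP = χ(𝒲 ∩ S⁺), where χ is the Choi–Jamiołkowski isomorphism from B(H ⊗ H) to maps on B(H). Moreover, every F ∈ S^CP, viewed as an element of B(H) ⊗ B(H)*, lies in the subspace S = W ⊗ (W^⊥ + W̃) + (W ∩ W̃^⊥) ⊗ B(H)* + B(H) ⊗ W^⊥. -/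

import Mathlib

open Matrix
open scoped ComplexOrder

/-- `Mat n` is `B(H)` for `H = ℂⁿ`: the `n × n` complex matrices. -/
abbrev Mat (n : ℕ) := Matrix (Fin n) (Fin n) ℂ

/-- The ampliation `Φ ⊗ id_k` of a linear map `Φ` on `B(ℂⁿ)`, acting block-wise on
`B(ℂⁿ ⊗ ℂᵏ)`. -/
noncomputable def amplL {n : ℕ} (Φ : Mat n →ₗ[ℂ] Mat n) (k : ℕ) :
    Matrix (Fin n × Fin k) (Fin n × Fin k) ℂ →ₗ[ℂ]
      Matrix (Fin n × Fin k) (Fin n × Fin k) ℂ where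
  toFun X := Matrix.of fun p q =>
    Φ (Matrix.of fun i j => X (i, p.2) (j, q.2)) p.1 q.1
  map_add' X Y := by
    ext p q
    have h : (Matrix.of fun i j => X (i, p.2) (j, q.2) + Y (i, p.2) (j, q.2))
        = (Matrix.of fun i j => X (i, p.2) (j, q.2))
          + (Matrix.of fun i j => Y (i, p.2) (j, q.2)) := by
      ext i j
      simp
    simp only [Matrix.of_apply, Matrix.add_apply]
    rw [h, map_add, Matrix.add_apply]
  map_smul' c X := by
    ext p q
    have h : (Matrix.of fun i j => c • X (i, p.2) (j, q.2))
        = c • (Matrix.of fun i j => X (i, p.2) (j, q.2)) := by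
      ext i j
      simp
    simp only [Matrix.of_apply, Matrix.smul_apply, RingHom.id_apply]
    rw [h, _root_.map_smul, Matrix.smul_apply]

/-- A linear map on `B(ℂⁿ)` is completely positive if all its ampliations
`Φ ⊗ id_k` preserve positive semidefiniteness. -/
def IsCP {n : ℕ} (Φ : Mat n →ₗ[ℂ] Mat n) : Prop :=
  ∀ (k : ℕ) (X : Matrix (Fin n × Fin k) (Fin n × Fin k) ℂ),
    X.PosSemidef → (amplL Φ k X).PosSemidef


/-- The Choi matrix of a linear map `Φ` on `B(ℂⁿ)`:
`C_{(i,j),(k,l)} = Φ(E_{ik})_{jl}`; by Choi's theorem, `Φ` is completely positive iff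
its Choi matrix is positive semidefinite.  Its inverse is the Choi–Jamiołkowski
isomorphism `χ`. -/
noncomputable def choi {n : ℕ} (Φ : Mat n →ₗ[ℂ] Mat n) :
    Matrix (Fin n × Fin n) (Fin n × Fin n) ℂ :=
  Matrix.of fun p q => Φ (Matrix.single p.1 q.1 (1 : ℂ)) p.2 q.2

/-- The set `S^CP` of completely positive maps `F` on `B(H)` such that `F(W) ⊆ W`
and `F*(W̃) ⊆ W̃`. -/
def SCP {n : ℕ} (W : Submodule ℂ (Mat n))
    (Wt : Submodule ℂ (Module.Dual ℂ (Mat n))) : Set (Mat n →ₗ[ℂ] Mat n) :=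
  {F | IsCP F ∧ (∀ X ∈ W, F X ∈ W) ∧ (∀ σ ∈ Wt, σ ∘ₗ F ∈ Wt)}

/-- The subspace of maps corresponding to the algebraic tensor product `A ⊗ B` of a
subspace `A ⊆ B(H)` and a subspace `B ⊆ B(H)*`, under the identification of
`B(H) ⊗ B(H)*` with linear maps on `B(H)` (the simple tensor `a ⊗ σ` is the map
`X ↦ σ(X) a`). -/
noncomputable def mapTensor {n : ℕ} (A : Submodule ℂ (Mat n))
    (B : Submodule ℂ (Module.Dual ℂ (Mat n))) : Submodule ℂ (Mat n →ₗ[ℂ] Mat n) :=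
  Submodule.span ℂ {F | ∃ a ∈ A, ∃ σ ∈ B, F = σ.smulRight a}

/-!
Choi's theorem turns complete positivity of `F` into positive semidefiniteness of `choi F`:
ampliating `F` on the maximally entangled projection gives back `choi F`, and conversely a
factorisation `choi F = Bᴴ B` exhibits `F` in Kraus form `X ↦ ∑ₘ Rₘᴴ X Rₘ`, whose ampliations
are again sums of congruences. The invariance conditions on `F` are linear and `choi` is linear
and injective, so `choi` maps `S^CP` onto the PSD matrices in the image of the invariant maps;
the cone is pointed because only `0` is PSD together with its negative.

For the subspace `S`, let `E = W ∩ W̃^⊥`, which every `F ∈ S^CP` maps into itself, and choose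
projections `P` onto `W` and `Q` onto `E`. A map with range in `A` that vanishes on `B_⊥` lies
in `A ⊗ B`. In `F = (1 - Q) F P + Q F P + F (1 - P)` the first summand has range in `W` and
vanishes on `E`, the second has range in `E`, and the third vanishes on `W`.
-/

open Kronecker

section Duality

variable {K V U : Type*} [Field K] [AddCommGroup V] [Module K V] [FiniteDimensional K V]
  [AddCommGroup U] [Module K U]

theorem mem_span_smulRight_of_range_le_of_le_ker {A : Submodule K U}
    {B : Submodule K (Module.Dual K V)} {G : V →ₗ[K] U} (hA : LinearMap.range G ≤ A)
    (hB : B.dualCoannihilator ≤ LinearMap.ker G) :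
    G ∈ Submodule.span K {F | ∃ a ∈ A, ∃ σ ∈ B, F = σ.smulRight a} := by
  set P := B.dualCoannihilator
  let b := Module.finBasis K (V ⧸ P)
  have hG : G = ∑ j, (b.coord j ∘ₗ P.mkQ).smulRight (P.liftQ G hB (b j)) := by
    ext x
    simp only [LinearMap.sum_apply, LinearMap.smulRight_apply, LinearMap.comp_apply,
      Module.Basis.coord_apply, ← map_smul, ← map_sum, b.sum_repr]
    rfl
  rw [hG]
  refine Submodule.sum_mem _ fun j _ => Submodule.subset_span ⟨_, hA ?_, _, ?_, rfl⟩
  · rw [← P.range_liftQ G hB]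
    exact LinearMap.mem_range_self _ _
  · rw [← Subspace.dualCoannihilator_dualAnnihilator_eq (W := B), Submodule.mem_dualAnnihilator]
    intro x hx
    simp [(Submodule.Quotient.mk_eq_zero P).mpr hx]

end Duality

section Invariance

variable {R V : Type*} [CommRing R] [AddCommGroup V] [Module R V]

def invariantMaps (W : Submodule R V) (Wt : Submodule R (Module.Dual R V)) :
    Submodule R (V →ₗ[R] V) :=
  W.compatibleMaps W ⊓ (Wt.compatibleMaps Wt).comap Module.Dual.transpose

variable {W : Submodule R V} {Wt : Submodule R (Module.Dual R V)} {F : V →ₗ[R] V}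

theorem mem_invariantMaps :
    F ∈ invariantMaps W Wt ↔ (∀ X ∈ W, F X ∈ W) ∧ ∀ σ ∈ Wt, σ ∘ₗ F ∈ Wt :=
  Iff.rfl

theorem mapsTo_inf_dualCoannihilator_of_mem_invariantMaps (hF : F ∈ invariantMaps W Wt)
    {X : V} (hX : X ∈ W ⊓ Wt.dualCoannihilator) : F X ∈ W ⊓ Wt.dualCoannihilator := by
  obtain ⟨hW, hWt⟩ := mem_invariantMaps.1 hF
  rw [Submodule.mem_inf, Submodule.mem_dualCoannihilator] at hX ⊢
  exact ⟨hW X hX.1, fun σ hσ => hX.2 _ (hWt σ hσ)⟩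

end Invariance

theorem mem_SCP_iff {n : ℕ} {W : Submodule ℂ (Mat n)} {Wt : Submodule ℂ (Module.Dual ℂ (Mat n))}
    {F : Mat n →ₗ[ℂ] Mat n} : F ∈ SCP W Wt ↔ IsCP F ∧ F ∈ invariantMaps W Wt := by
  rw [mem_invariantMaps]
  rfl

theorem Matrix.PosSemidef.eq_zero_of_posSemidef_neg {𝕜 m : Type*} [RCLike 𝕜] [Fintype m]
    {A : Matrix m m 𝕜} (hA : A.PosSemidef) (hnA : (-A).PosSemidef) : A = 0 := by
  open scoped MatrixOrder in exact le_antisymm (neg_nonneg.mp hnA.nonneg) hA.nonneg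

theorem Matrix.kroneckerMap_one_conjTranspose_mul_mul_apply {α m' n' l : Type*} [Fintype m']
    [Fintype l] [DecidableEq l] [CommRing α] [StarRing α] (R : Matrix m' n' α)
    (Y : Matrix (m' × l) (m' × l) α) (p q : n' × l) :
    ((R ⊗ₖ (1 : Matrix l l α))ᴴ * Y * (R ⊗ₖ (1 : Matrix l l α))) p q
      = (Rᴴ * Y.submatrix (·, p.2) (·, q.2) * R) p.1 q.1 := by
  simp [Matrix.mul_apply, Matrix.kroneckerMap_apply, Matrix.one_apply, Fintype.sum_prod_type,
    Finset.sum_mul, apply_ite star, ite_mul]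

theorem Matrix.map_eq_sum_smul_single {R M m' n' : Type*} [CommSemiring R] [AddCommMonoid M]
    [Module R M] [Fintype m'] [Fintype n'] [DecidableEq m'] [DecidableEq n']
    (F : Matrix m' n' R →ₗ[R] M) (X : Matrix m' n' R) :
    F X = ∑ i, ∑ k, X i k • F (single i k 1) := by
  conv_lhs => rw [matrix_eq_sum_single X]
  simp [map_sum, ← map_smul, smul_single]

section Choi

variable {n : ℕ}

theorem choi_apply (F : Mat n →ₗ[ℂ] Mat n) (i j k l : Fin n) :
    choi F (i, j) (k, l) = F (single i k 1) j l :=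
  rfl

theorem amplL_apply (Φ : Mat n →ₗ[ℂ] Mat n) (k : ℕ)
    (X : Matrix (Fin n × Fin k) (Fin n × Fin k) ℂ) (p q : Fin n × Fin k) :
    amplL Φ k X p q = Φ (X.submatrix (·, p.2) (·, q.2)) p.1 q.1 :=
  rfl

noncomputable def choiₗ : (Mat n →ₗ[ℂ] Mat n) →ₗ[ℂ] Matrix (Fin n × Fin n) (Fin n × Fin n) ℂ where
  toFun := choi
  map_add' _ _ := rfl
  map_smul' _ _ := rfl

theorem choi_injective : Function.Injective (choi (n := n)) := by
  intro F G h
  refine Matrix.ext_linearMap ℂ fun i k => LinearMap.ext_ring <| Matrix.ext fun j l => ?_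
  exact congr_fun₂ h (i, j) (k, l)

theorem choi_mem_map_choiₗ_iff {M : Submodule ℂ (Mat n →ₗ[ℂ] Mat n)} {F : Mat n →ₗ[ℂ] Mat n} :
    choi F ∈ M.map choiₗ ↔ F ∈ M :=
  ⟨fun ⟨_, hG, hGF⟩ => choi_injective hGF ▸ hG, Submodule.mem_map_of_mem⟩

def maxEntangledVec (n : ℕ) : Fin n × Fin n → ℂ := fun p => if p.1 = p.2 then 1 else 0

theorem amplL_vecMulVec_maxEntangledVec (F : Mat n →ₗ[ℂ] Mat n) :
    amplL F n (vecMulVec (maxEntangledVec n) (star (maxEntangledVec n)))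
      = (choi F).submatrix Prod.swap Prod.swap := by
  ext ⟨i, s⟩ ⟨j, t⟩
  have hblock : (vecMulVec (maxEntangledVec n) (star (maxEntangledVec n))).submatrix
      (·, s) (·, t) = single s t 1 := by
    ext a b
    simp only [submatrix_apply, vecMulVec_apply, maxEntangledVec, single_apply, Pi.star_apply,
      apply_ite star, star_one, star_zero]
    grind
  rw [amplL_apply, hblock]
  rfl

theorem IsCP.posSemidef_choi {F : Mat n →ₗ[ℂ] Mat n} (hF : IsCP F) : (choi F).PosSemidef := by
  have h := (hF n _ (posSemidef_vecMulVec_self_star (maxEntangledVec n))).submatrix Prod.swap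
  rwa [amplL_vecMulVec_maxEntangledVec, submatrix_submatrix, Prod.swap_swap_eq,
    submatrix_id_id] at h

theorem apply_eq_sum_conjTranspose_mul_mul_of_choi_eq {F : Mat n →ₗ[ℂ] Mat n}
    {B : Matrix (Fin n × Fin n) (Fin n × Fin n) ℂ} (hB : choi F = Bᴴ * B) (X : Mat n) :
    F X = ∑ m, (of fun i j => B m (i, j))ᴴ * X * of fun i j => B m (i, j) := by
  ext j l
  have hentry (i k : Fin n) : F (single i k 1) j l = ∑ m, star (B m (i, j)) * B m (k, l) := by
    rw [← choi_apply, hB, mul_apply]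
    rfl
  simp only [map_eq_sum_smul_single F X, Matrix.sum_apply, Matrix.smul_apply, smul_eq_mul, hentry,
    mul_apply, conjTranspose_apply, of_apply, Finset.mul_sum, Finset.sum_mul]
  rw [Finset.sum_comm_cycle]
  exact Finset.sum_congr rfl fun m _ => Finset.sum_comm.trans <|
    Finset.sum_congr rfl fun b _ => Finset.sum_congr rfl fun a _ => by ring

theorem amplL_eq_sum_of_apply_eq_sum {ι : Type*} [Fintype ι] {F : Mat n →ₗ[ℂ] Mat n}
    {R : ι → Mat n} (hF : ∀ X, F X = ∑ m, (R m)ᴴ * X * R m) (k : ℕ)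
    (Y : Matrix (Fin n × Fin k) (Fin n × Fin k) ℂ) :
    amplL F k Y = ∑ m, (R m ⊗ₖ (1 : Matrix (Fin k) (Fin k) ℂ))ᴴ * Y * (R m ⊗ₖ 1) := by
  ext p q
  simp only [amplL_apply, hF, Matrix.sum_apply, kroneckerMap_one_conjTranspose_mul_mul_apply]

theorem isCP_of_posSemidef_choi {F : Mat n →ₗ[ℂ] Mat n} (hF : (choi F).PosSemidef) : IsCP F := by
  obtain ⟨B, hB⟩ : ∃ B, choi F = star B * B := by
    open scoped MatrixOrder in exact CStarAlgebra.nonneg_iff_eq_star_mul_self.mp hF.nonneg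
  intro k Y hY
  rw [amplL_eq_sum_of_apply_eq_sum (apply_eq_sum_conjTranspose_mul_mul_of_choi_eq hB)]
  exact posSemidef_sum _ fun m _ => hY.conjTranspose_mul_mul_same _

theorem isCP_iff_posSemidef_choi {F : Mat n →ₗ[ℂ] Mat n} : IsCP F ↔ (choi F).PosSemidef :=
  ⟨IsCP.posSemidef_choi, isCP_of_posSemidef_choi⟩

theorem eq_zero_of_isCP_of_isCP_neg {F : Mat n →ₗ[ℂ] Mat n} (hF : IsCP F) (hnF : IsCP (-F)) :
    F = 0 := by
  refine choi_injective ?_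
  rw [show choi (0 : Mat n →ₗ[ℂ] Mat n) = 0 from map_zero choiₗ]
  exact hF.posSemidef_choi.eq_zero_of_posSemidef_neg (map_neg choiₗ F ▸ hnF.posSemidef_choi)

end Choi

open Submodule in
theorem mem_mapTensor_sup_of_mem_invariantMaps {n : ℕ} {W : Submodule ℂ (Mat n)}
    {Wt : Submodule ℂ (Module.Dual ℂ (Mat n))} {F : Mat n →ₗ[ℂ] Mat n}
    (hF : F ∈ invariantMaps W Wt) :
    F ∈ mapTensor W (W.dualAnnihilator ⊔ Wt) ⊔ mapTensor (W ⊓ Wt.dualCoannihilator) ⊤ ⊔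
      mapTensor ⊤ W.dualAnnihilator := by
  set E := W ⊓ Wt.dualCoannihilator
  obtain ⟨U, hU⟩ := W.exists_isCompl
  obtain ⟨E', hE'⟩ := E.exists_isCompl
  set P := W.projection U hU
  set Q := E.projection E' hE'
  have h₁ : (1 - Q) * F * P ∈ mapTensor W (W.dualAnnihilator ⊔ Wt) := by
    refine mem_span_smulRight_of_range_le_of_le_ker ?_ fun X hX => ?_
    · rintro _ ⟨X, rfl⟩
      exact sub_mem ((mem_invariantMaps.1 hF).1 _ (projection_apply_mem hU X))
        (projection_apply_mem hE' _).1
    · rw [dualCoannihilator_sup_eq, Subspace.dualAnnihilator_dualCoannihilator_eq] at hX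
      have hFX := mapsTo_inf_dualCoannihilator_of_mem_invariantMaps hF hX
      simp [P, Q, projection_apply_of_mem_left hU hX.1, projection_apply_of_mem_left hE' hFX]
  have h₂ : Q * F * P ∈ mapTensor E ⊤ := by
    refine mem_span_smulRight_of_range_le_of_le_ker ?_ fun X hX => ?_
    · rintro _ ⟨X, rfl⟩
      exact projection_apply_mem hE' _
    · rw [dualCoannihilator_top, mem_bot] at hX
      simp [hX]
  have h₃ : F * (1 - P) ∈ mapTensor ⊤ W.dualAnnihilator := by
    refine mem_span_smulRight_of_range_le_of_le_ker le_top fun X hX => ?_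
    rw [Subspace.dualAnnihilator_dualCoannihilator_eq] at hX
    simp [P, projection_apply_of_mem_left hU hX]
  have hsplit : F = (1 - Q) * F * P + Q * F * P + F * (1 - P) := by
    simp only [sub_mul, mul_sub, one_mul, mul_one]
    abel
  rw [hsplit]
  exact add_mem (add_mem (mem_sup_left (mem_sup_left h₁)) (mem_sup_left (mem_sup_right h₂)))
    (mem_sup_right h₃)

/-- for subspaces `W ⊆ B(H)` and `W̃ ⊆ B(H)*`, the set `S^CP` of
completely positive maps `F` with `F(W) ⊆ W` and `F*(W̃) ⊆ W̃` is a pointed SDR cone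
in `B(H) ⊗ B(H)*`: there is a subspace `𝒲 ⊆ B(H ⊗ H)` with
`S^CP = χ(𝒲 ∩ S⁺)` (via the Choi–Jamiołkowski isomorphism).  Moreover every
`F ∈ S^CP` lies in the subspace
`S = W ⊗ (W^⊥ + W̃) + (W ∩ W̃^⊥) ⊗ B(H)* + B(H) ⊗ W^⊥`. -/
theorem SCP_is_pointed_SDR_mapping_cone
    {n : ℕ} (W : Submodule ℂ (Mat n))
    (Wt : Submodule ℂ (Module.Dual ℂ (Mat n))) :
    -- S^CP is pointed
    (∀ F : Mat n →ₗ[ℂ] Mat n, F ∈ SCP W Wt → -F ∈ SCP W Wt → F = 0) ∧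
    -- S^CP is semidefinite representable, via the Choi–Jamiołkowski isomorphism
    (∃ 𝒲 : Submodule ℂ (Matrix (Fin n × Fin n) (Fin n × Fin n) ℂ),
      ∀ F : Mat n →ₗ[ℂ] Mat n,
        F ∈ SCP W Wt ↔ (choi F ∈ 𝒲 ∧ (choi F).PosSemidef)) ∧
    -- every F ∈ S^CP lies in the subspace S
    (∀ F ∈ SCP W Wt,
      F ∈ mapTensor W (W.dualAnnihilator ⊔ Wt) ⊔
            mapTensor (W ⊓ Wt.dualCoannihilator) ⊤ ⊔
            mapTensor ⊤ W.dualAnnihilator) := by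
  refine ⟨fun F hF hnF => eq_zero_of_isCP_of_isCP_neg hF.1 hnF.1,
    ⟨(invariantMaps W Wt).map choiₗ, fun F => ?_⟩,
    fun F hF => mem_mapTensor_sup_of_mem_invariantMaps (mem_SCP_iff.1 hF).2⟩
  rw [mem_SCP_iff, isCP_iff_posSemidef_choi, choi_mem_map_choiₗ_iff, and_comm]
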